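/- Let S be a Cu-semigroup and let F ⊆ S be an upward-directed subset. If S is countably-based (there is a countable subset B such that whenever x ≪ y there is b ∈ B with x ≤ b ≪ y, equivalently every element is a supremum of a ≪-increasing sequence from B), then F has a supremum in S. -/
import Mathlib


/-- The compact-containment (way-below) relation. -/
def WayBelow {S : Type*} [Preorder S] (x y : S) : Prop :=
  ∀ (t : ℕ → S) (u : S), Monotone t → IsLUB (Set.range t) u → y ≤ u → ∃ n, x ≤ t n

lemma wayBelow_le {S : Type*} [Preorder S] {x y : S} (h : WayBelow x y) : x ≤ y := by
  obtain ⟨n, hn⟩ := h (fun _ => y) y (monotone_const)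
    (by rw [Set.range_const]; exact isLUB_singleton) le_rfl
  exact hn

lemma wayBelow_of_le {S : Type*} [Preorder S] {x y z : S} (h : WayBelow x y) (hyz : y ≤ z) :
    WayBelow x z := fun t u hm hl hle => h t u hm hl (hyz.trans hle)

theorem directed_subset_has_sup_of_countably_based
    {S : Type*} [AddCommMonoid S] [PartialOrder S]
    -- S is a Cu-semigroup:
    (hS0 : ∀ x : S, 0 ≤ x)
    (hSadd : ∀ x y z w : S, x ≤ y → z ≤ w → x + z ≤ y + w)
    (hSsup : ∀ t : ℕ → S, Monotone t → ∃ u, IsLUB (Set.range t) u)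
    (hSbasis : ∀ s : S, ∃ t : ℕ → S, (∀ n, WayBelow (t n) (t (n + 1))) ∧
      IsLUB (Set.range t) s)
    (hSwbadd : ∀ x y z w : S, WayBelow x y → WayBelow z w → WayBelow (x + z) (y + w))
    -- S is countably-based:
    (B : Set S) (hBcount : B.Countable)
    (hB : ∀ x y : S, WayBelow x y → ∃ b ∈ B, x ≤ b ∧ WayBelow b y)
    -- F is an upward-directed subset:
    (F : Set S) (hF : DirectedOn (· ≤ ·) F) :
    ∃ u : S, IsLUB F u := by
  rcases F.eq_empty_or_nonempty with hFe | ⟨f₀, hf₀⟩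
  · refine ⟨0, ?_, fun v _ => hS0 v⟩
    intro x hx; rw [hFe] at hx; exact hx.elim
  -- The set of basis elements dominated by some element of F
  set D : Set S := {b | b ∈ B ∧ ∃ g ∈ F, b ≤ g} with hD
  have hDcount : D.Countable := hBcount.mono (fun b hb => hb.1)
  have hDne : D.Nonempty := by
    obtain ⟨t, hwb, hl⟩ := hSbasis f₀
    obtain ⟨b, hbB, _, hbwb⟩ := hB (t 0) (t 1) (hwb 0)
    exact ⟨b, hbB, f₀, hf₀, (wayBelow_le hbwb).trans (hl.1 ⟨1, rfl⟩)⟩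
  obtain ⟨e, he⟩ := Set.Countable.exists_eq_range hDcount hDne
  have heD : ∀ n, e n ∈ D := fun n => he ▸ ⟨n, rfl⟩
  -- build an increasing sequence in F dominating each e n
  have key : ∀ (x : S) (n : ℕ), ∃ y, y ∈ F ∧ (x ∈ F → x ≤ y) ∧ e n ≤ y := by
    intro x n
    obtain ⟨_, ⟨g, hgF, hbg⟩⟩ := heD n
    by_cases hx : x ∈ F
    · obtain ⟨y, hyF, hxy, hgy⟩ := hF x hx g hgF
      exact ⟨y, hyF, fun _ => hxy, hbg.trans hgy⟩
    · exact ⟨g, hgF, fun h => (hx h).elim, hbg⟩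
  choose next hnextF hnextLe hnextE using key
  set f : ℕ → S := fun n => Nat.rec (next f₀ 0) (fun n fn => next fn (n + 1)) n with hf
  have hfF : ∀ n, f n ∈ F := by
    intro n; induction n with
    | zero => exact hnextF f₀ 0
    | succ n ih => exact hnextF (f n) (n + 1)
  have hfE : ∀ n, e n ≤ f n := by
    intro n; cases n with
    | zero => exact hnextE f₀ 0
    | succ n => exact hnextE (f n) (n + 1)
  have hfmono : Monotone f :=
    monotone_nat_of_le_succ (fun n => hnextLe (f n) (n + 1) (hfF n))
  obtain ⟨u, hu⟩ := hSsup f hfmono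
  refine ⟨u, ?_, ?_⟩
  · -- u is an upper bound of F
    intro x hx
    obtain ⟨t, hwb, hl⟩ := hSbasis x
    refine le_trans (le_of_eq rfl) (hl.2 ?_)
    rintro _ ⟨n, rfl⟩
    have htx : WayBelow (t n) x := wayBelow_of_le (hwb n) (hl.1 ⟨n + 1, rfl⟩)
    obtain ⟨b, hbB, htb, hbx⟩ := hB (t n) x htx
    have hbD : b ∈ D := ⟨hbB, x, hx, wayBelow_le hbx⟩
    obtain ⟨k, hk⟩ := he ▸ hbD
    calc t n ≤ b := htb
      _ = e k := hk.symm
      _ ≤ f k := hfE k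
      _ ≤ u := hu.1 ⟨k, rfl⟩
  · intro v hv
    exact hu.2 (by rintro _ ⟨n, rfl⟩; exact hv (hfF n))
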